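/- arXiv:1008.2363 — 3 statements merged into one kernel-verified Lean document; each statement's English description precedes it below -/
import Mathlib

section
/- Let W : (0,∞) → ℝ be continuously differentiable, increasing, with W(x) → ∞ as x → ∞, and suppose W(x) = e^{Φx} V(x) where Φ > 0 and V is nondecreasing. Fix φ > Φ and define h(b) = φ² ∫₀^∞ e^{−φy}(W(y+b) − W(b)) dy for b > 0. Then h(b) ≥ W(b)·φΦ/(φ−Φ) for all b > 0; in particular h(b) → ∞ as b → ∞. -/
open MeasureTheory

lemma integral_exp_neg_mul_Ioi_zero {c : ℝ} (hc : 0 < c) :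
    (∫ x in Set.Ioi (0:ℝ), Real.exp (-c * x)) = c⁻¹ := by
  have h := integral_comp_mul_left_Ioi (fun x => Real.exp (-x)) 0 hc
  simp only [mul_zero, integral_exp_neg_Ioi_zero, smul_eq_mul, mul_one] at h
  rw [← h]
  congr 1 with x
  ring_nf

/-- If `W` is continuously differentiable, increasing, tends to `∞`, and
`W x = e^{Φ x} V x` with `V` nondecreasing and `0 < Φ < φ`, then
`h b = φ² ∫₀^∞ e^{−φ y}(W (y+b) − W b) dy` satisfies `h b ≥ W b · φΦ/(φ−Φ)` for all
`b > 0`; in particular `h b → ∞` as `b → ∞`. -/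
theorem h_lower_bound (W V : ℝ → ℝ) (Φ φ : ℝ)
    (hΦ : 0 < Φ) (hφΦ : Φ < φ)
    (hWdiff : ContDiffOn ℝ 1 W (Set.Ioi 0))
    (hWmono : MonotoneOn W (Set.Ioi 0))
    (hWtop : Filter.Tendsto W Filter.atTop Filter.atTop)
    (hWV : ∀ x ∈ Set.Ioi (0:ℝ), W x = Real.exp (Φ * x) * V x)
    (hVmono : MonotoneOn V (Set.Ioi 0))
    (hint : ∀ b ∈ Set.Ioi (0:ℝ),
      IntegrableOn (fun y => Real.exp (-φ * y) * (W (y + b) - W b)) (Set.Ioi 0)) :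
    (∀ b ∈ Set.Ioi (0:ℝ),
        W b * (φ * Φ / (φ - Φ)) ≤
          φ ^ 2 * ∫ y in Set.Ioi (0:ℝ), Real.exp (-φ * y) * (W (y + b) - W b)) ∧
    Filter.Tendsto
      (fun b => φ ^ 2 * ∫ y in Set.Ioi (0:ℝ), Real.exp (-φ * y) * (W (y + b) - W b))
      Filter.atTop Filter.atTop := by
  have hφ : 0 < φ := hΦ.trans hφΦ
  have hd : 0 < φ - Φ := sub_pos.mpr hφΦ
  have key : ∀ b ∈ Set.Ioi (0:ℝ),
      W b * (φ * Φ / (φ - Φ)) ≤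
        φ ^ 2 * ∫ y in Set.Ioi (0:ℝ), Real.exp (-φ * y) * (W (y + b) - W b) := by
    intro b hb
    have hb0 : (0:ℝ) < b := hb
    -- integrability of the lower bound
    have hi1 : IntegrableOn (fun y : ℝ => Real.exp (-(φ - Φ) * y)) (Set.Ioi 0) :=
      exp_neg_integrableOn_Ioi 0 hd
    have hi2 : IntegrableOn (fun y : ℝ => Real.exp (-φ * y)) (Set.Ioi 0) :=
      exp_neg_integrableOn_Ioi 0 hφ
    have hig : IntegrableOn
        (fun y : ℝ => W b * (Real.exp (-(φ - Φ) * y) - Real.exp (-φ * y))) (Set.Ioi 0) :=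
      ((hi1.sub hi2).const_mul _)
    -- pointwise bound
    have hpt : ∀ y ∈ Set.Ioi (0:ℝ),
        W b * (Real.exp (-(φ - Φ) * y) - Real.exp (-φ * y))
          ≤ Real.exp (-φ * y) * (W (y + b) - W b) := by
      intro y hy
      have hy0 : (0:ℝ) < y := hy
      have hyb : (0:ℝ) < y + b := by linarith
      have hV : V b ≤ V (y + b) := hVmono hb (by exact hyb) (by linarith)
      have hWb : W b = Real.exp (Φ * b) * V b := hWV b hb
      have hWyb : W (y + b) = Real.exp (Φ * (y + b)) * V (y + b) := hWV _ hyb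
      have h1 : Real.exp (Φ * (y + b)) * V b ≤ W (y + b) := by
        rw [hWyb]
        exact mul_le_mul_of_nonneg_left hV (Real.exp_pos _).le
      have h2 : W b * (Real.exp (Φ * y) - 1) ≤ W (y + b) - W b := by
        have : W b * (Real.exp (Φ * y) - 1) = Real.exp (Φ * (y + b)) * V b - W b := by
          rw [hWb]; rw [mul_add, Real.exp_add]; ring
        rw [this]; linarith
      have h3 : (0:ℝ) < Real.exp (-φ * y) := Real.exp_pos _
      calc W b * (Real.exp (-(φ - Φ) * y) - Real.exp (-φ * y))
          = Real.exp (-φ * y) * (W b * (Real.exp (Φ * y) - 1)) := by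
            rw [show -(φ - Φ) * y = Φ * y + (-φ * y) by ring, Real.exp_add]; ring
        _ ≤ Real.exp (-φ * y) * (W (y + b) - W b) :=
            mul_le_mul_of_nonneg_left h2 h3.le
    have hmono := setIntegral_mono_on hig (hint b hb) measurableSet_Ioi hpt
    -- compute the lower integral
    have hval : (∫ y in Set.Ioi (0:ℝ),
        W b * (Real.exp (-(φ - Φ) * y) - Real.exp (-φ * y)))
        = W b * ((φ - Φ)⁻¹ - φ⁻¹) := by
      rw [integral_const_mul, integral_sub hi1 hi2,
        integral_exp_neg_mul_Ioi_zero hd, integral_exp_neg_mul_Ioi_zero hφ]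
    rw [hval] at hmono
    have := mul_le_mul_of_nonneg_left hmono (by positivity : (0:ℝ) ≤ φ ^ 2)
    calc W b * (φ * Φ / (φ - Φ)) = φ ^ 2 * (W b * ((φ - Φ)⁻¹ - φ⁻¹)) := by
          field_simp; ring
      _ ≤ _ := this
  refine ⟨key, ?_⟩
  have hc : 0 < φ * Φ / (φ - Φ) := by positivity
  have h1 : Filter.Tendsto (fun b => W b * (φ * Φ / (φ - Φ))) Filter.atTop Filter.atTop :=
    hWtop.atTop_mul_const hc
  exact Filter.tendsto_atTop_mono' _
    (Filter.eventually_atTop.2 ⟨1, fun b hb => key b (by simp; linarith)⟩) h1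
end

section
/- Let w : [0,∞) → (0,∞) be continuous, continuously differentiable on (0,∞), with w' strictly convex on (0,∞) and w'(x) → ∞ as x → ∞. Let φ > 0 and suppose h(b) := φ∫₀^∞ e^{−φu} w'(u+b) du is finite for all b ≥ 0 with h(b) → ∞ as b → ∞, and h'(b) = φ(h(b) − w'(b)). Then there is a unique b* ∈ [0,∞) at which h attains its minimum; moreover h(b) < w'(b) for 0 ≤ b < b* and h(b) > w'(b) for b > b*, and if b* > 0 then h(b*) = w'(b*). -/
/-!
Put `g = h - w'`, so that `h' = φ g`. Subtracting `w' b = φ ∫₀^∞ e^{-φu} w' b du` from the formula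
for `h` gives `g b = φ ∫₀^∞ e^{-φu} (w'(u + b) - w' b) du`, and the increments
`w'(u + b) - w' b` of the strictly convex `w'` strictly increase with `b`. Hence `h'` is strictly
increasing on `(0, ∞)` and `h` is strictly convex on `[0, ∞)`. Being continuous and coercive, `h`
has exactly one minimizer `b*` there; strict convexity makes `h'` negative left of `b*` and
positive right of it, and `h' b* = 0` when `b*` is interior.
-/

open MeasureTheory Set Filter Real

lemma StrictConvexOn.sub_lt_sub_of_lt {𝕜 : Type*} [Field 𝕜] [LinearOrder 𝕜] [IsStrictOrderedRing 𝕜]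
    {s : Set 𝕜} {f : 𝕜 → 𝕜} (hf : StrictConvexOn 𝕜 s f) {x y u : 𝕜}
    (hx : x ∈ s) (hyu : y + u ∈ s) (hxy : x < y) (hu : 0 < u) :
    f (x + u) - f x < f (y + u) - f y := by
  have hxu : x + u ∈ s := hf.1.ordConnected.out hx hyu ⟨by linarith, by linarith⟩
  have hy : y ∈ s := hf.1.ordConnected.out hx hyu ⟨hxy.le, by linarith⟩
  -- compare both increments with the secant over `[x, y + u]`
  have h₁ := hf.secant_strict_mono hx hxu hyu (by linarith) (by linarith) (by linarith)
  have h₂ := hf.secant_strict_mono hyu hx hy (by linarith) (by linarith) hxy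
  rw [add_sub_cancel_left] at h₁
  rw [← neg_div_neg_eq, ← neg_div_neg_eq (f y - _), neg_sub, neg_sub, neg_sub, neg_sub,
    add_sub_cancel_left] at h₂
  exact (div_lt_div_iff_of_pos_right hu).mp (h₁.trans h₂)

lemma setIntegral_lt_setIntegral_of_lt {α : Type*} [MeasurableSpace α] {μ : Measure α}
    {s : Set α} {f g : α → ℝ} (hs : MeasurableSet s) (hμs : μ s ≠ 0)
    (hf : IntegrableOn f s μ) (hg : IntegrableOn g s μ) (hfg : ∀ x ∈ s, f x < g x) :
    ∫ x in s, f x ∂μ < ∫ x in s, g x ∂μ := by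
  rw [← sub_pos, ← integral_sub hg hf,
    setIntegral_pos_iff_support_of_nonneg_ae (f := fun x => g x - f x) _ (hg.sub hf)]
  · have hsupp : Function.support (fun x => g x - f x) ∩ s = s :=
      inter_eq_right.mpr fun x hx => sub_ne_zero.mpr (hfg x hx).ne'
    rwa [hsupp, pos_iff_ne_zero]
  · filter_upwards [ae_restrict_mem hs] with x hx using sub_nonneg.mpr (hfg x hx).le

section ExpWeight

variable {φ : ℝ} {f : ℝ → ℝ}

lemma integrableOn_exp_neg_mul_sub (hφ : 0 < φ)
    (hf : IntegrableOn (fun u => exp (-φ * u) * f u) (Ioi 0)) (c : ℝ) :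
    IntegrableOn (fun u => exp (-φ * u) * (f u - c)) (Ioi 0) := by
  simp only [mul_sub]
  exact hf.sub ((exp_neg_integrableOn_Ioi 0 hφ).mul_const c)

lemma mul_integral_exp_neg_mul_sub (hφ : 0 < φ)
    (hf : IntegrableOn (fun u => exp (-φ * u) * f u) (Ioi 0)) (c : ℝ) :
    φ * ∫ u in Ioi 0, exp (-φ * u) * (f u - c) =
      (φ * ∫ u in Ioi 0, exp (-φ * u) * f u) - c := by
  simp only [mul_sub]
  rw [integral_sub hf ((exp_neg_integrableOn_Ioi 0 hφ).mul_const c), integral_mul_const,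
    integral_exp_mul_Ioi (by linarith) 0]
  field_simp
  simp

lemma StrictConvexOn.strictMonoOn_integral_exp_neg_mul_sub (hφ : 0 < φ) {a : ℝ}
    (hf : StrictConvexOn ℝ (Ioi a) f)
    (hint : ∀ b ∈ Ioi a, IntegrableOn (fun u => exp (-φ * u) * f (u + b)) (Ioi 0)) :
    StrictMonoOn (fun b => ∫ u in Ioi 0, exp (-φ * u) * (f (u + b) - f b)) (Ioi a) := by
  intro b₁ hb₁ b₂ hb₂ hlt
  refine setIntegral_lt_setIntegral_of_lt measurableSet_Ioi (by simp)
    (integrableOn_exp_neg_mul_sub hφ (hint b₁ hb₁) _)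
    (integrableOn_exp_neg_mul_sub hφ (hint b₂ hb₂) _) fun u (hu : 0 < u) => ?_
  have hb₂u : b₂ + u ∈ Ioi a := (hb₂ : a < b₂).trans (lt_add_of_pos_right b₂ hu)
  simpa only [add_comm u] using
    mul_lt_mul_of_pos_left (hf.sub_lt_sub_of_lt hb₁ hb₂u hlt hu) (exp_pos (-φ * u))

end ExpWeight

lemma strictConvexOn_Ici_of_hasDerivAt {f f' : ℝ → ℝ} {a : ℝ}
    (hf : ∀ x ∈ Ici a, HasDerivAt f (f' x) x) (hf' : StrictMonoOn f' (Ioi a)) :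
    StrictConvexOn ℝ (Ici a) f := by
  refine StrictMonoOn.strictConvexOn_of_deriv (convex_Ici a)
    (fun x hx => (hf x hx).continuousAt.continuousWithinAt) ?_
  rw [interior_Ici]
  exact hf'.congr fun x (hx : a < x) => ((hf x hx.le).deriv).symm

lemma ContinuousOn.exists_isMinOn_Ici_of_tendsto_atTop {f : ℝ → ℝ} {a : ℝ}
    (hf : ContinuousOn f (Ici a)) (hfi : Tendsto f atTop atTop) :
    ∃ x ∈ Ici a, IsMinOn f (Ici a) x := by
  obtain ⟨R, hR⟩ := eventually_atTop.mp (hfi.eventually_ge_atTop (f a))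
  obtain ⟨x, hx, hmin⟩ := isCompact_Icc.exists_isMinOn (nonempty_Icc.mpr (le_max_left a R))
    (hf.mono Icc_subset_Ici_self)
  refine ⟨x, hx.1, fun y (hy : a ≤ y) => ?_⟩
  by_cases hyR : y ≤ max a R
  · exact hmin ⟨hy, hyR⟩
  · exact (hmin ⟨le_rfl, le_max_left a R⟩).trans
      (hR y ((le_max_right a R).trans (le_of_not_ge hyR)))

section StrictConvexMin

variable {S : Set ℝ} {f : ℝ → ℝ} {x₀ b f' : ℝ}

lemma StrictConvexOn.neg_of_hasDerivAt_of_lt_of_isMinOn (hf : StrictConvexOn ℝ S f)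
    (hmin : IsMinOn f S x₀) (hx₀ : x₀ ∈ S) (hb : b ∈ S) (hbx : b < x₀)
    (hf' : HasDerivAt f f' b) : f' < 0 :=
  (hf.lt_slope_of_hasDerivAt hb hx₀ hbx hf').trans_le <| by
    rw [slope_def_field]
    exact div_nonpos_of_nonpos_of_nonneg (sub_nonpos.mpr (hmin hb)) (sub_nonneg.mpr hbx.le)

lemma StrictConvexOn.pos_of_hasDerivAt_of_lt_of_isMinOn (hf : StrictConvexOn ℝ S f)
    (hmin : IsMinOn f S x₀) (hx₀ : x₀ ∈ S) (hb : b ∈ S) (hxb : x₀ < b)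
    (hf' : HasDerivAt f f' b) : 0 < f' :=
  lt_of_le_of_lt (by
    rw [slope_def_field]
    exact div_nonneg (sub_nonneg.mpr (hmin hb)) (sub_nonneg.mpr hxb.le))
    (hf.slope_lt_of_hasDerivAt hx₀ hb hxb hf')

end StrictConvexMin

theorem unique_minimizer_of_h_general (w : ℝ → ℝ) (φ : ℝ) (h : ℝ → ℝ)
    (hφ : 0 < φ)
    (hconv : StrictConvexOn ℝ (Set.Ioi 0) (deriv w))
    (hint : ∀ b ∈ Set.Ici (0:ℝ),
      IntegrableOn (fun u => Real.exp (-φ * u) * deriv w (u + b)) (Set.Ioi 0))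
    (hdef : ∀ b ∈ Set.Ici (0:ℝ),
      h b = φ * ∫ u in Set.Ioi (0:ℝ), Real.exp (-φ * u) * deriv w (u + b))
    (htop : Filter.Tendsto h Filter.atTop Filter.atTop)
    (hderiv : ∀ b ∈ Set.Ici (0:ℝ), HasDerivAt h (φ * (h b - deriv w b)) b) :
    ∃ bstar : ℝ, 0 ≤ bstar ∧
      (∀ b ∈ Set.Ici (0:ℝ), h bstar ≤ h b) ∧
      (∀ b ∈ Set.Ici (0:ℝ), (∀ c ∈ Set.Ici (0:ℝ), h b ≤ h c) → b = bstar) ∧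
      (∀ b, 0 ≤ b → b < bstar → h b < deriv w b) ∧
      (∀ b, bstar < b → deriv w b < h b) ∧
      (0 < bstar → h bstar = deriv w bstar) := by
  have hrep : ∀ b ∈ Ici (0:ℝ),
      h b - deriv w b = φ * ∫ u in Ioi 0, exp (-φ * u) * (deriv w (u + b) - deriv w b) :=
    fun b hb => by rw [hdef b hb, mul_integral_exp_neg_mul_sub hφ (hint b hb)]
  have hmono := hconv.strictMonoOn_integral_exp_neg_mul_sub hφ fun b hb =>
    hint b (Ioi_subset_Ici_self hb)
  have hgap : StrictMonoOn (fun b => φ * (h b - deriv w b)) (Ioi 0) := by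
    intro b₁ hb₁ b₂ hb₂ hlt
    simp only [hrep b₁ (Ioi_subset_Ici_self hb₁), hrep b₂ (Ioi_subset_Ici_self hb₂)]
    exact mul_lt_mul_of_pos_left (mul_lt_mul_of_pos_left (hmono hb₁ hb₂ hlt) hφ) hφ
  have hconvh : StrictConvexOn ℝ (Ici 0) h := strictConvexOn_Ici_of_hasDerivAt hderiv hgap
  obtain ⟨bstar, hbstar, hmin⟩ := ContinuousOn.exists_isMinOn_Ici_of_tendsto_atTop
    (fun b hb => (hderiv b hb).continuousAt.continuousWithinAt) htop
  refine ⟨bstar, hbstar, hmin, fun b hb hbmin => hconvh.eq_of_isMinOn hbmin hmin hb hbstar,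
    fun b hb hlt => ?_, fun b hlt => ?_, fun hpos => ?_⟩
  · exact sub_neg.mp <| neg_of_mul_neg_right
      (hconvh.neg_of_hasDerivAt_of_lt_of_isMinOn hmin hbstar hb hlt (hderiv b hb)) hφ.le
  · have hb : b ∈ Ici (0:ℝ) := (hbstar : (0:ℝ) ≤ bstar).trans hlt.le
    exact sub_pos.mp <| (mul_pos_iff_of_pos_left hφ).mp
      (hconvh.pos_of_hasDerivAt_of_lt_of_isMinOn hmin hbstar hb hlt (hderiv b hb))
  · have hloc : IsLocalMin h bstar := hmin.isLocalMin (Ici_mem_nhds hpos)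
    exact sub_eq_zero.mp <|
      (mul_eq_zero.mp (hloc.hasDerivAt_eq_zero (hderiv bstar hbstar))).resolve_left hφ.ne'

/-- If `w'` is strictly convex on `(0,∞)` tending to `∞`, `φ > 0`,
`h b = φ ∫₀^∞ e^{−φ u} w'(u+b) du` is finite with `h → ∞` and
`h' b = φ (h b − w' b)`, then `h` has a unique minimizer `b* ∈ [0,∞)`; moreover
`h < w'` on `[0, b*)`, `h > w'` on `(b*, ∞)`, and `h b* = w' b*` if `b* > 0`. -/
theorem unique_minimizer_of_h (w : ℝ → ℝ) (φ : ℝ) (h : ℝ → ℝ)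
    (hφ : 0 < φ)
    (hwcont : ContinuousOn w (Set.Ici 0))
    (hwC1 : ContDiffOn ℝ 1 w (Set.Ioi 0))
    (hconv : StrictConvexOn ℝ (Set.Ioi 0) (deriv w))
    (hwtop : Filter.Tendsto (deriv w) Filter.atTop Filter.atTop)
    (hint : ∀ b ∈ Set.Ici (0:ℝ),
      IntegrableOn (fun u => Real.exp (-φ * u) * deriv w (u + b)) (Set.Ioi 0))
    (hdef : ∀ b ∈ Set.Ici (0:ℝ),
      h b = φ * ∫ u in Set.Ioi (0:ℝ), Real.exp (-φ * u) * deriv w (u + b))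
    (htop : Filter.Tendsto h Filter.atTop Filter.atTop)
    (hderiv : ∀ b ∈ Set.Ici (0:ℝ), HasDerivAt h (φ * (h b - deriv w b)) b) :
    ∃ bstar : ℝ, 0 ≤ bstar ∧
      (∀ b ∈ Set.Ici (0:ℝ), h bstar ≤ h b) ∧
      (∀ b ∈ Set.Ici (0:ℝ), (∀ c ∈ Set.Ici (0:ℝ), h b ≤ h c) → b = bstar) ∧
      (∀ b, 0 ≤ b → b < bstar → h b < deriv w b) ∧
      (∀ b, bstar < b → deriv w b < h b) ∧
      (0 < bstar → h bstar = deriv w bstar) :=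
  unique_minimizer_of_h_general w φ h hφ hconv hint hdef htop hderiv
end

section
/- Let f(x) = ∫₀^∞ e^{−xt} μ(dt) be completely monotone (μ a nonnegative Borel measure making f finite on (0,∞)), let δ > 0, C > 0, b* > 0, and let W' : (0,b*] → ℝ be a positive function with W'(y) ≥ W'(b*) = C for all y ∈ (0,b*]. Define for t > 0, g(t) = δe^{b*t} + ((1−δW(0))/C)·t − (δ/C)∫₀^{b*} t e^{yt} W'(y) dy, where W(0) ≥ 0 and δW(0) ≤ 1. Then g''(t) ≤ 0 for all t > 0, i.e., g is concave on (0,∞). -/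
/-!
Differentiating twice under the integral sign gives
`g''(t) = δ b*² e^{b* t} - (δ/C) ∫₀^{b*} (2y + y²t) e^{yt} W'(y) dy`.
The weight `(2y + y²t) e^{yt} = ∂_y (y² e^{yt})` is nonnegative for `t ≥ 0` and integrates to
`b*² e^{b* t}`, so `W' ≥ C` bounds the integral below by `C b*² e^{b* t}` and `g'' ≤ 0`.
-/

open MeasureTheory intervalIntegral Real Set

theorem hasDerivAt_intervalIntegral_mul {K K' : ℝ → ℝ → ℝ} {w : ℝ → ℝ} {a b : ℝ}
    (hK : ∀ t y, HasDerivAt (fun t => K t y) (K' t y) t) (hKc : ∀ t, Continuous (K t))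
    (hK'c : Continuous (Function.uncurry K')) (hw : ContinuousOn w (uIcc a b)) (t₀ : ℝ) :
    HasDerivAt (fun t => ∫ y in a..b, K t y * w y) (∫ y in a..b, K' t₀ y * w y) t₀ := by
  obtain ⟨M, hM⟩ :=
    ((isCompact_closedBall t₀ 1).prod isCompact_uIcc).exists_bound_of_continuousOn
      (f := fun p : ℝ × ℝ => K' p.1 p.2 * w p.2)
      (hK'c.continuousOn.mul (hw.comp continuousOn_snd fun p hp => hp.2))
  refine (hasDerivAt_integral_of_dominated_loc_of_deriv_le (bound := fun _ => M)
    (Metric.ball_mem_nhds t₀ one_pos)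
    (.of_forall fun t => (((hKc t).continuousOn.mul hw).mono uIoc_subset_uIcc).aestronglyMeasurable
      measurableSet_uIoc)
    ((hKc t₀).continuousOn.mul hw).intervalIntegrable
    ((((hK'c.comp (Continuous.prodMk_right t₀)).continuousOn.mul hw).mono
      uIoc_subset_uIcc).aestronglyMeasurable measurableSet_uIoc)
    (.of_forall fun y hy t ht =>
      hM (t, y) ⟨Metric.ball_subset_closedBall ht, uIoc_subset_uIcc hy⟩)
    intervalIntegrable_const
    (.of_forall fun y _ t _ => (hK t y).mul_const (w y))).2

theorem hasDerivAt_mul_exp_mul (y t : ℝ) :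
    HasDerivAt (fun t => t * exp (y * t)) ((1 + y * t) * exp (y * t)) t :=
  ((hasDerivAt_id' t).mul ((hasDerivAt_id' t).const_mul y).exp).congr_deriv (by ring)

theorem hasDerivAt_one_add_mul_mul_exp_mul (y t : ℝ) :
    HasDerivAt (fun t => (1 + y * t) * exp (y * t)) ((2 * y + y ^ 2 * t) * exp (y * t)) t :=
  ((((hasDerivAt_id' t).const_mul y).const_add 1).mul
    ((hasDerivAt_id' t).const_mul y).exp).congr_deriv (by ring)

theorem hasDerivAt_sq_mul_exp_mul (y t : ℝ) :
    HasDerivAt (fun y => y ^ 2 * exp (y * t)) ((2 * y + y ^ 2 * t) * exp (y * t)) y :=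
  ((hasDerivAt_pow 2 y).mul ((hasDerivAt_id' y).mul_const t).exp).congr_deriv (by ring)

theorem integral_two_mul_add_sq_mul_mul_exp_mul (b t : ℝ) :
    ∫ y in (0 : ℝ)..b, (2 * y + y ^ 2 * t) * exp (y * t) = b ^ 2 * exp (b * t) := by
  rw [integral_eq_sub_of_hasDerivAt (fun y _ => hasDerivAt_sq_mul_exp_mul y t)
    (by apply Continuous.intervalIntegrable; fun_prop)]
  simp

theorem mul_sq_mul_exp_le_integral {w : ℝ → ℝ} {C b t : ℝ} (hb : 0 ≤ b) (ht : 0 ≤ t)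
    (hw : ContinuousOn w (Icc 0 b)) (hCw : ∀ y ∈ Ioc 0 b, C ≤ w y) :
    C * (b ^ 2 * exp (b * t)) ≤
      ∫ y in (0 : ℝ)..b, (2 * y + y ^ 2 * t) * exp (y * t) * w y := by
  calc C * (b ^ 2 * exp (b * t))
      = ∫ y in (0 : ℝ)..b, (2 * y + y ^ 2 * t) * exp (y * t) * C := by
        rw [intervalIntegral.integral_mul_const, integral_two_mul_add_sq_mul_mul_exp_mul, mul_comm]
    _ ≤ ∫ y in (0 : ℝ)..b, (2 * y + y ^ 2 * t) * exp (y * t) * w y := by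
      refine intervalIntegral.integral_mono_on_of_le_Ioo hb
        (by apply Continuous.intervalIntegrable; fun_prop)
        (ContinuousOn.intervalIntegrable (by rw [uIcc_of_le hb]; fun_prop))
        fun y hy => mul_le_mul_of_nonneg_left (hCw y (Ioo_subset_Ioc_self hy)) ?_
      have : 0 ≤ 2 * y + y ^ 2 * t := by nlinarith [hy.1]
      positivity

theorem g_concave_general (Wp : ℝ → ℝ) (δ C bstar W0 : ℝ)
    (hδ : 0 < δ) (hC : 0 < C) (hbstar : 0 < bstar)
    (hWpcont : ContinuousOn Wp (Set.Icc 0 bstar))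
    (hWpC : ∀ y ∈ Set.Ioc (0:ℝ) bstar, C ≤ Wp y) :
    (∀ t ∈ Set.Ioi (0:ℝ),
        deriv (deriv (fun t => δ * Real.exp (bstar * t) + (1 - δ * W0) / C * t -
          δ / C * ∫ y in (0:ℝ)..bstar, t * Real.exp (y * t) * Wp y)) t ≤ 0) ∧
    ConcaveOn ℝ (Set.Ioi 0)
      (fun t => δ * Real.exp (bstar * t) + (1 - δ * W0) / C * t -
        δ / C * ∫ y in (0:ℝ)..bstar, t * Real.exp (y * t) * Wp y) := by
  set g := fun t => δ * Real.exp (bstar * t) + (1 - δ * W0) / C * t -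
    δ / C * ∫ y in (0:ℝ)..bstar, t * Real.exp (y * t) * Wp y
  have hw : ContinuousOn Wp (uIcc 0 bstar) := by rwa [uIcc_of_le hbstar.le]
  have hexp (t : ℝ) : HasDerivAt (fun t => exp (bstar * t)) (bstar * exp (bstar * t)) t :=
    (((hasDerivAt_id' t).const_mul bstar).exp).congr_deriv (by ring)
  have hg' (t : ℝ) : HasDerivAt g (δ * (bstar * exp (bstar * t)) + (1 - δ * W0) / C -
      δ / C * ∫ y in (0:ℝ)..bstar, (1 + y * t) * exp (y * t) * Wp y) t :=
    (((hexp t).const_mul δ).add ((hasDerivAt_id' t).const_mul _ |>.congr_deriv (mul_one _))).sub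
      ((hasDerivAt_intervalIntegral_mul (fun t y => hasDerivAt_mul_exp_mul y t)
        (fun t => by fun_prop) (by fun_prop) hw t).const_mul _)
  have hg'' (t : ℝ) : HasDerivAt (deriv g) (δ * (bstar ^ 2 * exp (bstar * t)) -
      δ / C * ∫ y in (0:ℝ)..bstar, (2 * y + y ^ 2 * t) * exp (y * t) * Wp y) t := by
    rw [show deriv g = _ from funext fun t => (hg' t).deriv]
    refine ((((hexp t).const_mul bstar).const_mul δ).add_const _ |>.sub
      ((hasDerivAt_intervalIntegral_mul (fun t y => hasDerivAt_one_add_mul_mul_exp_mul y t)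
        (fun t => by fun_prop) (by fun_prop) hw t).const_mul _)).congr_deriv (by ring)
  have hg''_nonpos : ∀ t ∈ Ioi (0 : ℝ), deriv (deriv g) t ≤ 0 := by
    intro t ht
    have hlow := mul_sq_mul_exp_le_integral hbstar.le (le_of_lt ht) hWpcont hWpC
    rw [(hg'' t).deriv, sub_nonpos]
    calc δ * (bstar ^ 2 * exp (bstar * t)) = δ / C * (C * (bstar ^ 2 * exp (bstar * t))) := by
          field_simp
      _ ≤ _ := mul_le_mul_of_nonneg_left hlow (by positivity)
  refine ⟨hg''_nonpos, concaveOn_of_deriv2_nonpos' (convex_Ioi 0)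
    (fun t _ => (hg' t).differentiableAt.differentiableWithinAt)
    (fun t _ => (hg'' t).differentiableAt.differentiableWithinAt) hg''_nonpos⟩

/-- Let `δ > 0`, `C > 0`, `b* > 0`, `W' ≥ C` on `(0,b*]` with `W'(b*) = C`, `W0 ≥ 0`
with `δ W0 ≤ 1`, and `g t = δ e^{b* t} + ((1 − δ W0)/C) t − (δ/C)∫₀^{b*} t e^{y t} W'(y) dy`.
Then `g'' ≤ 0` on `(0,∞)`, i.e. `g` is concave there. -/
theorem g_concave (Wp : ℝ → ℝ) (δ C bstar W0 : ℝ)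
    (hδ : 0 < δ) (hC : 0 < C) (hbstar : 0 < bstar)
    (hWpcont : ContinuousOn Wp (Set.Icc 0 bstar))
    (hWpC : ∀ y ∈ Set.Ioc (0:ℝ) bstar, C ≤ Wp y)
    (hWpb : Wp bstar = C)
    (hW0 : 0 ≤ W0) (hδW0 : δ * W0 ≤ 1) :
    (∀ t ∈ Set.Ioi (0:ℝ),
        deriv (deriv (fun t => δ * Real.exp (bstar * t) + (1 - δ * W0) / C * t -
          δ / C * ∫ y in (0:ℝ)..bstar, t * Real.exp (y * t) * Wp y)) t ≤ 0) ∧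
    ConcaveOn ℝ (Set.Ioi 0)
      (fun t => δ * Real.exp (bstar * t) + (1 - δ * W0) / C * t -
        δ / C * ∫ y in (0:ℝ)..bstar, t * Real.exp (y * t) * Wp y) :=
  g_concave_general Wp δ C bstar W0 hδ hC hbstar hWpcont hWpC
end
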